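/- arXiv:1905.04233 — 2 statements merged into one kernel-verified Lean document; each statement's English description precedes it below -/
import Mathlib

section
/- Let S : F × O → ℝ be a proper scoring rule on a convex class F of probability distributions. Then S is diagonal-continuous at every G ∈ F: for all F ∈ F, writing Fλ = λF + (1−λ)G, one has S̄(Fλ, G) → S̄(G, G) as λ ↓ 0. Moreover, the quantitative bound |S̄(Fλ, G) − S̄(G, G)| ≤ (λ/(1−λ)) · (S̄(G, F) − S̄(F, F)) holds for all λ ∈ [0,1). -/
open MeasureTheory Filter

/-- The mixture `l • μ + (1-l) • ν` of two measures. -/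
noncomputable def mix {O : Type*} [MeasurableSpace O] (μ ν : Measure O) (l : ℝ) : Measure O :=
  ENNReal.ofReal l • μ + ENNReal.ofReal (1 - l) • ν

/-- `S` is a proper scoring rule on the class `𝓕` (first argument: forecast,
integration: with respect to the true distribution). -/
def ProperScoringRule {O : Type*} [MeasurableSpace O]
    (𝓕 : Set (Measure O)) (S : Measure O → O → ℝ) : Prop :=
  (∀ F ∈ 𝓕, ∀ G ∈ 𝓕, Integrable (S F) G) ∧
  (∀ F ∈ 𝓕, ∀ G ∈ 𝓕, ∫ y, S F y ∂F ≤ ∫ y, S G y ∂F)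

lemma integral_mix {O : Type*} [MeasurableSpace O] (F G : Measure O) (l : ℝ)
    (hl0 : 0 ≤ l) (hl1 : l ≤ 1) (f : O → ℝ)
    (hF : Integrable f F) (hG : Integrable f G) :
    ∫ y, f y ∂(mix F G l) = l * ∫ y, f y ∂F + (1 - l) * ∫ y, f y ∂G := by
  unfold mix
  rw [integral_add_measure (hF.smul_measure ENNReal.ofReal_ne_top)
      (hG.smul_measure ENNReal.ofReal_ne_top),
    integral_smul_measure, integral_smul_measure,
    ENNReal.toReal_ofReal hl0, ENNReal.toReal_ofReal (by linarith)]
  simp [smul_eq_mul]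

/-- Every proper scoring rule is diagonal-continuous, with a quantitative bound. -/
theorem proper_scoring_rule_diagonal_continuous {O : Type*} [MeasurableSpace O]
    (𝓕 : Set (Measure O)) (hprob : ∀ F ∈ 𝓕, IsProbabilityMeasure F)
    (hconv : ∀ F ∈ 𝓕, ∀ G ∈ 𝓕, ∀ l ∈ Set.Icc (0:ℝ) 1, mix F G l ∈ 𝓕)
    (S : Measure O → O → ℝ) (hS : ProperScoringRule 𝓕 S)
    (G : Measure O) (hG : G ∈ 𝓕) (F : Measure O) (hF : F ∈ 𝓕) :
    (∀ l ∈ Set.Ico (0:ℝ) 1,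
      |(∫ y, S (mix F G l) y ∂G) - ∫ y, S G y ∂G| ≤
        l / (1 - l) * ((∫ y, S G y ∂F) - ∫ y, S F y ∂F)) ∧
    Tendsto (fun l : ℝ => ∫ y, S (mix F G l) y ∂G)
      (nhdsWithin 0 (Set.Ioi 0)) (nhds (∫ y, S G y ∂G)) := by
  obtain ⟨hint, hprop⟩ := hS
  have key : ∀ l ∈ Set.Ico (0:ℝ) 1,
      |(∫ y, S (mix F G l) y ∂G) - ∫ y, S G y ∂G| ≤
        l / (1 - l) * ((∫ y, S G y ∂F) - ∫ y, S F y ∂F) := by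
    intro l hl
    obtain ⟨hl0, hl1⟩ := hl
    have hl1' : l ≤ 1 := le_of_lt hl1
    have hFl : mix F G l ∈ 𝓕 := hconv F hF G hG l ⟨hl0, hl1'⟩
    -- lower bound : diff ≥ 0
    have hlow : ∫ y, S G y ∂G ≤ ∫ y, S (mix F G l) y ∂G := hprop G hG (mix F G l) hFl
    -- properness at mix
    have hup : ∫ y, S (mix F G l) y ∂(mix F G l) ≤ ∫ y, S G y ∂(mix F G l) :=
      hprop (mix F G l) hFl G hG
    rw [integral_mix F G l hl0 hl1' _ (hint (mix F G l) hFl F hF) (hint (mix F G l) hFl G hG),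
      integral_mix F G l hl0 hl1' _ (hint G hG F hF) (hint G hG G hG)] at hup
    have hFlF : ∫ y, S F y ∂F ≤ ∫ y, S (mix F G l) y ∂F := hprop F hF (mix F G l) hFl
    rw [abs_of_nonneg (by linarith), div_mul_eq_mul_div, le_div_iff₀ (by linarith)]
    nlinarith
  refine ⟨key, ?_⟩
  rw [tendsto_iff_dist_tendsto_zero]
  apply squeeze_zero' (Eventually.of_forall fun _ => dist_nonneg)
    (g := fun l : ℝ => l / (1 - l) * ((∫ y, S G y ∂F) - ∫ y, S F y ∂F))
  · filter_upwards [Ioo_mem_nhdsGT_of_mem (by norm_num : (0:ℝ) ∈ Set.Ico 0 1)] with l hl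
    rw [Real.dist_eq]
    exact key l ⟨le_of_lt hl.1, hl.2⟩
  · have : ContinuousAt (fun l : ℝ => l / (1 - l) * ((∫ y, S G y ∂F) - ∫ y, S F y ∂F)) 0 := by
      fun_prop (disch := norm_num)
    have h := this.continuousWithinAt (s := Set.Ioi 0)
    simpa using h.tendsto
end

section
/- Let F be a convex class of probability distributions, T : F → ℝ a max-functional with sup T(F) not attained (e.g., T unbounded above or image an open interval). Then there is no k ∈ ℕ, no mixture-continuous elicitable functional T' : F → A' ⊆ ℝ^k with elicitable components and int(T'(F)) ≠ ∅, and no link function f : T'(F) → ℝ such that T = f ∘ T'. In other words, T has infinite elicitation complexity with respect to the class of mixture-continuous intermediate functionals with elicitable components and image of nonempty interior. -/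
open MeasureTheory

/-- `S` is a strictly `𝓕`-consistent scoring function for the functional `T`. -/
def StrictlyConsistent {O A : Type*} [MeasurableSpace O]
    (𝓕 : Set (Measure O)) (T : Measure O → A) (S : A → O → ℝ) : Prop :=
  (∀ x, ∀ F ∈ 𝓕, Integrable (S x) F) ∧
  (∀ x, ∀ F ∈ 𝓕, ∫ y, S (T F) y ∂F ≤ ∫ y, S x y ∂F) ∧
  (∀ x, ∀ F ∈ 𝓕, ∫ y, S x y ∂F = ∫ y, S (T F) y ∂F → x = T F)


/-- `T` is a max-functional on the class `𝓕`. -/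
def MaxFunctional {O : Type*} [MeasurableSpace O]
    (𝓕 : Set (Measure O)) (T : Measure O → ℝ) : Prop :=
  ∀ F₀ ∈ 𝓕, ∀ F₁ ∈ 𝓕, ∀ l ∈ Set.Ioo (0:ℝ) 1, T (mix F₁ F₀ l) = max (T F₀) (T F₁)

lemma mix_zero {O : Type*} [MeasurableSpace O] (μ ν : Measure O) : mix μ ν 0 = ν := by
  simp [mix]

lemma mix_one {O : Type*} [MeasurableSpace O] (μ ν : Measure O) : mix μ ν 1 = μ := by
  simp [mix]

lemma integral_mix_s15 {O : Type*} [MeasurableSpace O] {μ ν : Measure O} {g : O → ℝ}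
    (hμ : Integrable g μ) (hν : Integrable g ν) {t : ℝ} (ht : t ∈ Set.Icc (0:ℝ) 1) :
    ∫ y, g y ∂(mix μ ν t) = t * ∫ y, g y ∂μ + (1 - t) * ∫ y, g y ∂ν := by
  rw [mix, integral_add_measure (hμ.smul_measure ENNReal.ofReal_ne_top)
      (hν.smul_measure ENNReal.ofReal_ne_top), integral_smul_measure, integral_smul_measure,
      ENNReal.toReal_ofReal ht.1, ENNReal.toReal_ofReal (by linarith [ht.2])]
  simp [smul_eq_mul]

/-- Convex level sets of an elicitable real-valued functional. -/
lemma cxls {O : Type*} [MeasurableSpace O] {𝓕 : Set (Measure O)}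
    {Tr : Measure O → ℝ} {S : ℝ → O → ℝ} (hS : StrictlyConsistent 𝓕 Tr S)
    {U V : Measure O} (hU : U ∈ 𝓕) (hV : V ∈ 𝓕) {t : ℝ} (ht : t ∈ Set.Icc (0:ℝ) 1)
    (hmem : mix V U t ∈ 𝓕) (heq : Tr U = Tr V) : Tr (mix V U t) = Tr U := by
  obtain ⟨hInt, hcons, hstrict⟩ := hS
  have h1 : ∀ x, ∫ y, S x y ∂(mix V U t) = t * ∫ y, S x y ∂V + (1-t) * ∫ y, S x y ∂U :=
    fun x => integral_mix_s15 (hInt x V hV) (hInt x U hU) ht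
  have key : ∫ y, S (Tr U) y ∂(mix V U t) ≤ ∫ y, S (Tr (mix V U t)) y ∂(mix V U t) := by
    rw [h1, h1]
    have hA : ∫ y, S (Tr U) y ∂V ≤ ∫ y, S (Tr (mix V U t)) y ∂V := by
      rw [heq]; exact hcons _ V hV
    have hB : ∫ y, S (Tr U) y ∂U ≤ ∫ y, S (Tr (mix V U t)) y ∂U := hcons _ U hU
    have ht1 : (0:ℝ) ≤ t := ht.1
    have ht2 : (0:ℝ) ≤ 1 - t := by linarith [ht.2]
    have := mul_le_mul_of_nonneg_left hA ht1
    have := mul_le_mul_of_nonneg_left hB ht2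
    linarith
  have key2 := hcons (Tr U) _ hmem
  exact (hstrict (Tr U) _ hmem (le_antisymm key key2)).symm

/-- Along a mixture path between two measures whose `T'`-values differ only in
coordinate `i`, every point strictly between the two `T'`-values is attained by
`T'` at an interior mixture, where `T` takes the value `max (T U) (T V)`. -/
lemma lemF {O : Type*} [MeasurableSpace O] {𝓕 : Set (Measure O)}
    (hconv : ∀ F ∈ 𝓕, ∀ G ∈ 𝓕, ∀ l ∈ Set.Icc (0:ℝ) 1, mix F G l ∈ 𝓕)
    {T : Measure O → ℝ} (hmax : MaxFunctional 𝓕 T)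
    {k : ℕ} {T' : Measure O → (Fin k → ℝ)}
    (hmc : ∀ F ∈ 𝓕, ∀ G ∈ 𝓕,
      ContinuousOn (fun l : ℝ => T' (mix F G l)) (Set.Icc 0 1))
    (hcomp : ∀ i : Fin k, ∃ S : ℝ → O → ℝ, StrictlyConsistent 𝓕 (fun F => T' F i) S)
    {U V : Measure O} (hU : U ∈ 𝓕) (hV : V ∈ 𝓕) (i : Fin k)
    (hagree : ∀ j, j ≠ i → T' U j = T' V j)
    (p : Fin k → ℝ) (hpj : ∀ j, j ≠ i → p j = T' U j)
    (hne1 : p i ≠ T' U i) (hne2 : p i ≠ T' V i)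
    (hbet : p i ∈ Set.uIcc (T' U i) (T' V i)) :
    ∃ M ∈ 𝓕, T' M = p ∧ T M = max (T U) (T V) := by
  have hg : ContinuousOn (fun t : ℝ => T' (mix V U t) i) (Set.Icc 0 1) :=
    (continuous_apply i).comp_continuousOn (hmc V hV U hU)
  have h01 : Set.uIcc (0:ℝ) 1 = Set.Icc 0 1 := Set.uIcc_of_le zero_le_one
  have hivt := intermediate_value_uIcc (f := fun t : ℝ => T' (mix V U t) i)
    (a := (0:ℝ)) (b := 1) (by rw [h01]; exact hg)
  have h0 : T' (mix V U 0) i = T' U i := by rw [mix_zero]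
  have h1 : T' (mix V U 1) i = T' V i := by rw [mix_one]
  have hmem : p i ∈ (fun t : ℝ => T' (mix V U t) i) '' Set.uIcc 0 1 := by
    apply hivt
    simpa [h0, h1] using hbet
  obtain ⟨t, htI, hgt0⟩ := hmem
  have hgt : T' (mix V U t) i = p i := hgt0
  rw [h01] at htI
  have ht0 : t ≠ 0 := by
    rintro rfl
    rw [h0] at hgt
    exact hne1 hgt.symm
  have ht1 : t ≠ 1 := by
    rintro rfl
    rw [h1] at hgt
    exact hne2 hgt.symm
  have htIoo : t ∈ Set.Ioo (0:ℝ) 1 :=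
    ⟨lt_of_le_of_ne htI.1 (Ne.symm ht0), lt_of_le_of_ne htI.2 ht1⟩
  have hMmem : mix V U t ∈ 𝓕 := hconv V hV U hU t htI
  refine ⟨mix V U t, hMmem, ?_, hmax U hU V hV t htIoo⟩
  funext j
  by_cases hj : j = i
  · subst hj; exact hgt
  · obtain ⟨S, hS⟩ := hcomp j
    have hc := cxls hS hU hV htI hMmem (hagree j hj)
    exact hc.trans (hpj j hj).symm

/-- A max-functional whose supremum is not attained has infinite elicitation
complexity with respect to mixture-continuous intermediate functionals with
elicitable components and image of non-empty interior: no finite-dimensional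
elicitable intermediate functional together with a link function can represent it. -/
theorem max_functional_infinite_elicitation_complexity
    {O : Type*} [MeasurableSpace O]
    (𝓕 : Set (Measure O)) (hprob : ∀ F ∈ 𝓕, IsProbabilityMeasure F)
    (hconv : ∀ F ∈ 𝓕, ∀ G ∈ 𝓕, ∀ l ∈ Set.Icc (0:ℝ) 1, mix F G l ∈ 𝓕)
    (T : Measure O → ℝ) (hmax : MaxFunctional 𝓕 T)
    (hsup : ¬ ∃ F ∈ 𝓕, ∀ G ∈ 𝓕, T G ≤ T F)
    (k : ℕ) (T' : Measure O → (Fin k → ℝ))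
    (hmc : ∀ F ∈ 𝓕, ∀ G ∈ 𝓕,
      ContinuousOn (fun l : ℝ => T' (mix F G l)) (Set.Icc 0 1))
    (helic : ∃ S : (Fin k → ℝ) → O → ℝ, StrictlyConsistent 𝓕 T' S)
    (hcomp : ∀ i : Fin k, ∃ S : ℝ → O → ℝ, StrictlyConsistent 𝓕 (fun F => T' F i) S)
    (hint : (interior (T' '' 𝓕)).Nonempty) :
    ¬ ∃ f : (Fin k → ℝ) → ℝ, ∀ F ∈ 𝓕, T F = f (T' F) := by
  classical
  rintro ⟨f, hf⟩
  obtain ⟨x, hx⟩ := hint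
  obtain ⟨F, hF, hTF⟩ := interior_subset hx
  apply hsup
  refine ⟨F, hF, fun G hG => ?_⟩
  by_contra hcon
  push_neg at hcon
  -- a ball around x inside the image of T'
  obtain ⟨r, hr, hball⟩ := Metric.isOpen_iff.mp isOpen_interior x hx
  have hballim : Metric.ball x r ⊆ T' '' 𝓕 := hball.trans interior_subset
  -- pick a small l ∈ (0,1) with T'(mix G F l) close to x
  have hc0 : ContinuousWithinAt (fun l : ℝ => T' (mix G F l)) (Set.Icc 0 1) 0 :=
    (hmc G hG F hF) 0 ⟨le_refl 0, zero_le_one⟩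
  rw [Metric.continuousWithinAt_iff] at hc0
  obtain ⟨δ, hδ, hδ'⟩ := hc0 r hr
  set l : ℝ := min (δ/2) (1/2) with hldef
  have hl0 : 0 < l := lt_min (by linarith) (by norm_num)
  have hlI : l ∈ Set.Icc (0:ℝ) 1 := ⟨hl0.le, le_trans (min_le_right _ _) (by norm_num)⟩
  have hlO : l ∈ Set.Ioo (0:ℝ) 1 := ⟨hl0, lt_of_le_of_lt (min_le_right _ _) (by norm_num)⟩
  have hld : dist l (0:ℝ) < δ := by
    rw [Real.dist_eq, sub_zero, abs_of_pos hl0]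
    exact lt_of_le_of_lt (min_le_left _ _) (by linarith)
  have hy0 := hδ' hlI hld
  have hy' : dist (T' (mix G F l)) (T' (mix G F 0)) < r := hy0
  rw [mix_zero, hTF] at hy'
  set y : Fin k → ℝ := T' (mix G F l) with hydef
  have hmixmem : mix G F l ∈ 𝓕 := hconv G hG F hF l hlI
  have hfy : f y = T G := by
    have h2 := hf (mix G F l) hmixmem
    have h3 := hmax F hF G hG l hlO
    rw [h3] at h2
    rw [← h2, max_eq_right hcon.le]
  -- coordinate-wise walk from y to x inside the ball
  let z : ℕ → (Fin k → ℝ) := fun m j => if (j : ℕ) < m then x j else y j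
  have hzlt : ∀ (m : ℕ) (j : Fin k), (j : ℕ) < m → z m j = x j := fun m j h => if_pos h
  have hzge : ∀ (m : ℕ) (j : Fin k), ¬ (j : ℕ) < m → z m j = y j := fun m j h => if_neg h
  have hcoord : ∀ j : Fin k, dist (y j) (x j) < r :=
    fun j => lt_of_le_of_lt (dist_le_pi_dist y x j) hy'
  have hzball : ∀ m, z m ∈ Metric.ball x r := by
    intro m
    rw [Metric.mem_ball, dist_pi_lt_iff hr]
    intro j
    by_cases hj : (j : ℕ) < m
    · rw [hzlt m j hj]; simpa using hr
    · rw [hzge m j hj]; exact hcoord j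
  have hstep : ∀ m, f (z m) ≤ f (z (m+1)) := by
    intro m
    by_cases hm : m < k
    · set i : Fin k := ⟨m, hm⟩ with hidef
      have him : (i : ℕ) = m := rfl
      have hzsucc_i : z (m+1) i = x i := hzlt (m+1) i (by omega)
      have hzm_i : z m i = y i := hzge m i (by omega)
      have hsame : ∀ j : Fin k, j ≠ i → z (m+1) j = z m j := by
        intro j hj
        have hjm : (j : ℕ) ≠ m := by
          intro h; exact hj (Fin.ext (by omega))
        by_cases h : (j : ℕ) < m
        · rw [hzlt (m+1) j (by omega), hzlt m j h]
        · rw [hzge (m+1) j (by omega), hzge m j h]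
      by_cases hxy : x i = y i
      · have hzz : z (m+1) = z m := by
          funext j
          by_cases hj : j = i
          · subst hj; rw [hzsucc_i, hzm_i, hxy]
          · exact hsame j hj
        rw [hzz]
      · -- nontrivial step: use the reflection of y i through x i
        set w : Fin k → ℝ := Function.update (z (m+1)) i (2 * x i - y i) with hwdef
        have hwi : w i = 2 * x i - y i := Function.update_self i _ _
        have hwj : ∀ j, j ≠ i → w j = z (m+1) j := fun j hj =>
          Function.update_of_ne hj _ _
        have hwball : w ∈ Metric.ball x r := by
          rw [Metric.mem_ball, dist_pi_lt_iff hr]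
          intro j
          by_cases hj : j = i
          · rw [hj, hwi, Real.dist_eq, show 2 * x i - y i - x i = -(y i - x i) by ring, abs_neg,
              ← Real.dist_eq]
            exact hcoord i
          · rw [hwj j hj]
            exact lt_of_le_of_lt (dist_le_pi_dist (z (m+1)) x j)
              (Metric.mem_ball.mp (hzball (m+1)))
        obtain ⟨W, hW, hTW⟩ := hballim hwball
        obtain ⟨V', hV', hTV⟩ := hballim (hzball m)
        have hagree : ∀ j, j ≠ i → T' W j = T' V' j := by
          intro j hj
          rw [hTW, hTV, hwj j hj, hsame j hj]
        have hpj : ∀ j, j ≠ i → z (m+1) j = T' W j := by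
          intro j hj
          rw [hTW, hwj j hj]
        have hne1 : z (m+1) i ≠ T' W i := by
          rw [hzsucc_i, hTW, hwi]
          intro h; apply hxy; linarith
        have hne2 : z (m+1) i ≠ T' V' i := by
          rw [hzsucc_i, hTV, hzm_i]
          exact hxy
        have hbet : z (m+1) i ∈ Set.uIcc (T' W i) (T' V' i) := by
          rw [hzsucc_i, hTW, hwi, hTV, hzm_i]
          rcases le_total (x i) (y i) with h | h
          · exact Set.mem_uIcc.mpr (Or.inl ⟨by linarith, h⟩)
          · exact Set.mem_uIcc.mpr (Or.inr ⟨h, by linarith⟩)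
        obtain ⟨M, hM, hTM, hTmax⟩ :=
          lemF hconv hmax hmc hcomp hW hV' i hagree (z (m+1)) hpj hne1 hne2 hbet
        have h4 : f (z m) = T V' := by rw [← hTV]; exact (hf V' hV').symm
        have h5 : f (z (m+1)) = T M := by rw [← hTM]; exact (hf M hM).symm
        rw [h4, h5, hTmax]
        exact le_max_right _ _
    · have hzz : z (m+1) = z m := by
        funext j
        have hjk : (j : ℕ) < k := j.isLt
        rw [hzlt (m+1) j (by omega), hzlt m j (by omega)]
      rw [hzz]
  have hchain : ∀ m, f (z 0) ≤ f (z m) := by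
    intro m
    induction m with
    | zero => exact le_refl _
    | succ n ih => exact ih.trans (hstep n)
  have hz0 : z 0 = y := by funext j; exact hzge 0 j (by omega)
  have hzk : z k = x := by funext j; exact hzlt k j j.isLt
  have hle : f y ≤ f x := by rw [← hz0, ← hzk]; exact hchain k
  have hfx : f x = T F := by rw [← hTF]; exact (hf F hF).symm
  rw [hfy, hfx] at hle
  exact absurd hle (not_le.mpr hcon)
end
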